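/- The isotypic component of L of the type of X — the sum of all G-submodules of L isomorphic to X as G-modules — equals the A^G-submodule generated by X, namely A^G·X := span_ℂ{D x : D ∈ A^G, x ∈ X}. (Intermediate claim in the proof of Theorem 2.2, part 1.) -/

import Mathlib

/-!
Dixmier's form of Schur's lemma: a division algebra of countable dimension over `ℂ` is `ℂ`,
since for a transcendental element `x` the resolvents `(x - c)⁻¹`, `c ∈ ℂ`, would be uncountably
many linearly independent elements. Hence `End_A(L) = ℂ`, and the Jacobson density theorem shows
that every linear map from the finite-dimensional `X` to `L` is the restriction of an element of
`A`; in particular so is every `G`-isomorphism `X ≃ Y`. Splitting off the `G`-stable annihilator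
of `X` in `A` by complete reducibility, the other component of such an element is `G`-invariant
and still restricts to the isomorphism, so `Y ⊆ A^G·X`. Conversely, by Schur's lemma for `G`, an
invariant `D` maps `X` either to `0` or isomorphically onto a `G`-submodule.
-/

/-- Conjugation action of a group element on endomorphisms of `L`:
`g · T := ρ(g) ∘ T ∘ ρ(g)⁻¹`. -/
def conjEnd {G L : Type*} [Group G] [AddCommGroup L] [Module ℂ L]
    (ρ : Representation ℂ G L) (g : G) :
    Module.End ℂ L →ₗ[ℂ] Module.End ℂ L where
  toFun T := ρ g ∘ₗ T ∘ₗ ρ g⁻¹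
  map_add' T S := by ext v; simp
  map_smul' c T := by ext v; simp

open Cardinal

universe u v w

theorem IsAlgClosed.algebraMap_surjective_of_lift_rank_lt {k : Type u} {K : Type v} [Field k]
    [IsAlgClosed k] [Field K] [Algebra k K]
    (h : Cardinal.lift.{u} (Module.rank k K) < Cardinal.lift.{v} #k) :
    Function.Surjective (algebraMap k K) := by
  have : Algebra.IsAlgebraic k K := ⟨fun x => by
    by_contra hx
    exact h.not_ge (Transcendental.linearIndependent_sub_inv hx).cardinal_lift_le_rank⟩
  exact IsAlgClosed.algebraMap_bijective_of_isIntegral.2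

theorem DivisionRing.algebraMap_surjective_of_lift_rank_lt {k : Type u} {D : Type v} [Field k]
    [IsAlgClosed k] [DivisionRing D] [Algebra k D]
    (h : Cardinal.lift.{u} (Module.rank k D) < Cardinal.lift.{v} #k) :
    Function.Surjective (algebraMap k D) := by
  intro x
  -- the double centralizer of `x` is a commutative division subalgebra, i.e. a field
  let Z := Subalgebra.centralizer k (Subalgebra.centralizer k {x} : Set D)
  have hcomm : ∀ a ∈ Z, ∀ b ∈ Z, a * b = b * a := fun a ha b hb =>
    Set.centralizer_centralizer_comm_of_comm (by simp) a ha b hb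
  let _ : CommRing Z := { (inferInstance : Ring Z) with
    mul_comm := fun a b => Subtype.ext (hcomm a a.2 b b.2) }
  let _ : Field Z := Field.ofIsUnitOrEqZero fun a => by
    rcases eq_or_ne a 0 with ha | ha
    · exact .inr ha
    · have ha' : (a : D) ≠ 0 := by simpa using ha
      exact .inl (IsUnit.of_mul_eq_one (⟨(a : D)⁻¹, Set.inv_mem_centralizer₀ a.2⟩ : Z)
        (Subtype.ext (mul_inv_cancel₀ ha')))
  have hZ : Cardinal.lift.{u} (Module.rank k Z) < Cardinal.lift.{v} #k :=
    (Cardinal.lift_le.2 (Submodule.rank_le (Subalgebra.toSubmodule Z))).trans_lt h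
  obtain ⟨c, hc⟩ := IsAlgClosed.algebraMap_surjective_of_lift_rank_lt hZ
    ⟨x, Set.subset_centralizer_centralizer rfl⟩
  exact ⟨c, congrArg Subtype.val hc⟩

theorem Complex.lift_rank_lt_of_span_countable {V : Type v} [AddCommGroup V] [Module ℂ V]
    {s : Set V} (hs : s.Countable) (hspan : Submodule.span ℂ s = ⊤) :
    Cardinal.lift.{0} (Module.rank ℂ V) < Cardinal.lift.{v} #ℂ := by
  have hV : Module.rank ℂ V ≤ ℵ₀ := by
    have := rank_span_le (R := ℂ) s
    rw [hspan, rank_top] at this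
    exact this.trans (Cardinal.mk_le_aleph0_iff.2 hs.to_subtype)
  rw [Cardinal.lift_uzero, Cardinal.mk_complex, Cardinal.lift_continuum]
  exact hV.trans_lt Cardinal.aleph0_lt_continuum

section SimpleModule

variable {k : Type u} {R : Type w} {M : Type v} [Field k] [Ring R] [Algebra k R]
  [AddCommGroup M] [Module R M] [Module k M] [IsScalarTower k R M]

theorem Module.End.rank_le_of_isSimpleModule [IsSimpleModule R M] :
    Module.rank k (Module.End R M) ≤ Module.rank k M := by
  have := IsSimpleModule.nontrivial R M
  obtain ⟨v, hv⟩ := exists_ne (0 : M)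
  let ev : Module.End R M →ₗ[k] M :=
    { toFun f := f v, map_add' _ _ := rfl, map_smul' _ _ := rfl }
  refine LinearMap.rank_le_of_injective ev fun f g hfg => ?_
  rw [← sub_eq_zero]
  exact (f - g).injective_or_eq_zero.resolve_left fun hinj =>
    hv (hinj (by simpa [ev, sub_eq_zero] using hfg))

theorem Module.End.algebraMap_surjective_of_isSimpleModule [IsAlgClosed k] [IsSimpleModule R M]
    (h : Cardinal.lift.{u} (Module.rank k M) < Cardinal.lift.{v} #k) :
    Function.Surjective (algebraMap k (Module.End R M)) := by
  classical
  exact DivisionRing.algebraMap_surjective_of_lift_rank_lt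
    ((Cardinal.lift_le.2 Module.End.rank_le_of_isSimpleModule).trans_lt h)

theorem IsSimpleModule.exists_smul_eq_of_finiteDimensional [IsAlgClosed k] [IsSimpleModule R M]
    (h : Cardinal.lift.{u} (Module.rank k M) < Cardinal.lift.{v} #k)
    (X : Submodule k M) [FiniteDimensional k X] (φ : X →ₗ[k] M) :
    ∃ r : R, ∀ x : X, r • (x : M) = φ x := by
  obtain ⟨f, rfl⟩ := LinearMap.exists_extend φ
  have hscalar := Module.End.algebraMap_surjective_of_isSimpleModule (R := R) h
  -- `R`-linear endomorphisms are scalars, so `f` commutes with them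
  let F : Module.End (Module.End R M) M :=
    { toFun := f
      map_add' := f.map_add
      map_smul' g m := by
        obtain ⟨c, rfl⟩ := hscalar g
        simp }
  obtain ⟨s, hs⟩ := (Submodule.fg_iff_finiteDimensional X).2 ‹_›
  obtain ⟨r, hr⟩ := jacobson_density F s
  refine ⟨r, fun x => ?_⟩
  exact LinearMap.eqOn_span (f := DistribSMul.toLinearMap k M r) (g := f)
    (fun m hm => (hr m hm).symm) (hs.symm ▸ x.2)

end SimpleModule

theorem Submodule.exists_fixed_sub_mem_of_disjoint {R M G : Type*} [Ring R] [AddCommGroup M]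
    [Module R M] (σ : G → M →ₗ[R] M) {I q : Submodule R M}
    (hI : ∀ g, ∀ m ∈ I, σ g m ∈ I) (hq : ∀ g, ∀ m ∈ q, σ g m ∈ q) (hIq : Disjoint I q)
    {T : M} (hT : T ∈ I ⊔ q) (hTfix : ∀ g, σ g T - T ∈ I) :
    ∃ w ∈ q, (∀ g, σ g w = w) ∧ T - w ∈ I := by
  obtain ⟨t, ht, w, hw, rfl⟩ := Submodule.mem_sup.1 hT
  refine ⟨w, hw, fun g => ?_, by simpa using ht⟩
  have hwI : σ g w - w ∈ I := by
    convert sub_mem (hTfix g) (sub_mem (hI g t ht) ht) using 1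
    rw [map_add]
    abel
  exact sub_eq_zero.1 ((Submodule.disjoint_def.1 hIq) _ hwI (sub_mem (hq g w hw) hw))

theorem Subalgebra.isSimpleModule_of_forall_invariant {k L : Type*} [Field k] [AddCommGroup L]
    [Module k L] [Nontrivial L] (A : Subalgebra k (Module.End k L))
    (hA : ∀ p : Submodule k L, (∀ T ∈ A, ∀ x ∈ p, T x ∈ p) → p = ⊥ ∨ p = ⊤) :
    IsSimpleModule A L := by
  refine (isSimpleModule_iff A L).2 ⟨fun p => ?_⟩
  have hp : ∀ T ∈ A, ∀ x ∈ p.restrictScalars k, T x ∈ p.restrictScalars k :=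
    fun T hT x hx => p.smul_mem (⟨T, hT⟩ : A) hx
  simpa only [Submodule.restrictScalars_eq_bot_iff, Submodule.restrictScalars_eq_top_iff]
    using hA _ hp

section Representation

variable {G : Type*} {L : Type v} [Group G] [AddCommGroup L] [Module ℂ L]
  (ρ : Representation ℂ G L)

@[simp]
theorem conjEnd_apply (g : G) (T : Module.End ℂ L) (v : L) :
    conjEnd ρ g T v = ρ g (T (ρ g⁻¹ v)) :=
  rfl

variable {ρ}

theorem apply_comm_of_conjEnd_eq {D : Module.End ℂ L} {g : G} (hD : conjEnd ρ g D = D) (v : L) :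
    D (ρ g v) = ρ g (D v) := by
  simpa [Representation.inv_self_apply] using (LinearMap.congr_fun hD (ρ g v)).symm

theorem finiteDimensional_of_irreducible
    (hlocfin : ∀ v : L, ∃ Y : Submodule ℂ L,
      (∀ g : G, ∀ y ∈ Y, ρ g y ∈ Y) ∧ FiniteDimensional ℂ Y ∧ v ∈ Y)
    {X : Submodule ℂ L} (hXinv : ∀ g : G, ∀ x ∈ X, ρ g x ∈ X)
    (hXirr : ∀ p : Submodule ℂ L, p ≤ X → (∀ g : G, ∀ x ∈ p, ρ g x ∈ p) →
      p = ⊥ ∨ p = X) :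
    FiniteDimensional ℂ X := by
  rcases eq_or_ne X ⊥ with rfl | hX
  · infer_instance
  obtain ⟨v, hvX, hv⟩ := Submodule.exists_mem_ne_zero_of_ne_bot hX
  obtain ⟨Y, hYinv, hYfin, hvY⟩ := hlocfin v
  rcases hXirr (X ⊓ Y) inf_le_left fun g y hy => ⟨hXinv g y hy.1, hYinv g y hy.2⟩ with h | h
  · exact absurd ((Submodule.mem_bot ℂ).1 (h ▸ ⟨hvX, hvY⟩)) hv
  · exact Submodule.finiteDimensional_of_le (inf_eq_left.1 h)

def Representation.isotypicComponent (X : Submodule ℂ L)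
    (hXinv : ∀ g : G, ∀ x ∈ X, ρ g x ∈ X) : Submodule ℂ L :=
  sSup {Y : Submodule ℂ L | (∀ g : G, ∀ y ∈ Y, ρ g y ∈ Y) ∧
    ∃ e : X ≃ₗ[ℂ] Y, ∀ (g : G) (x : X), (e ⟨ρ g x, hXinv g x x.2⟩ : L) = ρ g (e x)}

theorem le_isotypicComponent {X Y : Submodule ℂ L} (hXinv : ∀ g : G, ∀ x ∈ X, ρ g x ∈ X)
    (hYinv : ∀ g : G, ∀ y ∈ Y, ρ g y ∈ Y) (e : X ≃ₗ[ℂ] Y)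
    (he : ∀ (g : G) (x : X), (e ⟨ρ g x, hXinv g x x.2⟩ : L) = ρ g (e x)) :
    Y ≤ ρ.isotypicComponent X hXinv :=
  le_sSup ⟨hYinv, e, he⟩

theorem apply_mem_isotypicComponent {X : Submodule ℂ L}
    (hXinv : ∀ g : G, ∀ x ∈ X, ρ g x ∈ X)
    (hXirr : ∀ p : Submodule ℂ L, p ≤ X → (∀ g : G, ∀ x ∈ p, ρ g x ∈ p) →
      p = ⊥ ∨ p = X)
    {D : Module.End ℂ L} (hD : ∀ g : G, conjEnd ρ g D = D) {x : L} (hx : x ∈ X) :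
    D x ∈ ρ.isotypicComponent X hXinv := by
  have hcomm g := apply_comm_of_conjEnd_eq (hD g)
  rcases hXirr (X ⊓ LinearMap.ker D) inf_le_left
    (fun g y hy => ⟨hXinv g y hy.1, by simp [hcomm, (LinearMap.mem_ker).1 hy.2]⟩) with h | h
  · have hinj : Function.Injective (D ∘ₗ X.subtype) := fun a b hab => by
      have hab' : (a - b : L) ∈ X ⊓ LinearMap.ker D :=
        ⟨sub_mem a.2 b.2, by simpa [sub_eq_zero] using hab⟩
      simpa [h, sub_eq_zero] using hab'
    refine le_isotypicComponent hXinv ?_ (LinearEquiv.ofInjective _ hinj) (fun g y => ?_)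
      ⟨⟨x, hx⟩, rfl⟩
    · rintro g _ ⟨y, rfl⟩
      exact ⟨⟨ρ g y, hXinv g y y.2⟩, hcomm g y⟩
    · simp [hcomm]
  · simp [(LinearMap.mem_ker).1 (inf_eq_left.1 h hx)]

theorem exists_conjEnd_invariant_eqOn {A : Subalgebra ℂ (Module.End ℂ L)}
    (hAG : ∀ g : G, ∀ T ∈ A, conjEnd ρ g T ∈ A)
    (hAcompred : ∀ p : Submodule ℂ (Module.End ℂ L),
      p ≤ Subalgebra.toSubmodule A → (∀ g : G, ∀ S ∈ p, conjEnd ρ g S ∈ p) →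
      ∃ q : Submodule ℂ (Module.End ℂ L), q ≤ Subalgebra.toSubmodule A ∧
        (∀ g : G, ∀ S ∈ q, conjEnd ρ g S ∈ q) ∧
        p ⊓ q = ⊥ ∧ p ⊔ q = Subalgebra.toSubmodule A)
    {X : Submodule ℂ L} (hXinv : ∀ g : G, ∀ x ∈ X, ρ g x ∈ X)
    {T : Module.End ℂ L} (hTA : T ∈ A) (hT : ∀ g : G, ∀ x ∈ X, T (ρ g x) = ρ g (T x)) :
    ∃ D ∈ A, (∀ g : G, conjEnd ρ g D = D) ∧ ∀ x ∈ X, D x = T x := by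
  let I := Subalgebra.toSubmodule A ⊓ LinearMap.ker (LinearMap.lcomp ℂ L X.subtype)
  have hmemI S : S ∈ I ↔ S ∈ A ∧ ∀ x ∈ X, S x = 0 := by
    simp [I, LinearMap.ext_iff]
  have hIinv : ∀ g : G, ∀ S ∈ I, conjEnd ρ g S ∈ I := by
    intro g S hS
    rw [hmemI] at hS ⊢
    exact ⟨hAG g S hS.1, fun x hx => by simp [hS.2 _ (hXinv g⁻¹ x hx)]⟩
  have hTfix : ∀ g : G, conjEnd ρ g T - T ∈ I := by
    intro g
    rw [hmemI]
    exact ⟨sub_mem (hAG g T hTA) hTA, fun x hx => by simp [hT g⁻¹ x hx]⟩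
  obtain ⟨q, hqA, hqinv, hIq, hIqA⟩ := hAcompred I inf_le_left hIinv
  obtain ⟨D, hDq, hDfix, hTD⟩ := Submodule.exists_fixed_sub_mem_of_disjoint (conjEnd ρ) hIinv
    hqinv (disjoint_iff.2 hIq) (hIqA ▸ hTA) hTfix
  refine ⟨D, hqA hDq, hDfix, fun x hx => ?_⟩
  exact (sub_eq_zero.1 (((hmemI _).1 hTD).2 x hx)).symm

theorem le_span_conjEnd_invariant_apply {A : Subalgebra ℂ (Module.End ℂ L)} [IsSimpleModule A L]
    (hrank : Cardinal.lift.{0} (Module.rank ℂ L) < Cardinal.lift.{v} #ℂ)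
    (hAG : ∀ g : G, ∀ T ∈ A, conjEnd ρ g T ∈ A)
    (hAcompred : ∀ p : Submodule ℂ (Module.End ℂ L),
      p ≤ Subalgebra.toSubmodule A → (∀ g : G, ∀ S ∈ p, conjEnd ρ g S ∈ p) →
      ∃ q : Submodule ℂ (Module.End ℂ L), q ≤ Subalgebra.toSubmodule A ∧
        (∀ g : G, ∀ S ∈ q, conjEnd ρ g S ∈ q) ∧
        p ⊓ q = ⊥ ∧ p ⊔ q = Subalgebra.toSubmodule A)
    {X Y : Submodule ℂ L} [FiniteDimensional ℂ X] (hXinv : ∀ g : G, ∀ x ∈ X, ρ g x ∈ X)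
    (e : X ≃ₗ[ℂ] Y)
    (he : ∀ (g : G) (x : X), (e ⟨ρ g x, hXinv g x x.2⟩ : L) = ρ g (e x)) :
    Y ≤ Submodule.span ℂ
      {y : L | ∃ D ∈ A, (∀ g : G, conjEnd ρ g D = D) ∧ ∃ x ∈ X, D x = y} := by
  obtain ⟨T, hT⟩ := IsSimpleModule.exists_smul_eq_of_finiteDimensional (R := A) hrank X
    (Y.subtype ∘ₗ e.toLinearMap)
  have hTe : ∀ x (hx : x ∈ X), (T : Module.End ℂ L) x = e ⟨x, hx⟩ :=
    fun x hx => hT ⟨x, hx⟩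
  obtain ⟨D, hDA, hDfix, hDT⟩ := exists_conjEnd_invariant_eqOn hAG hAcompred hXinv T.2
    fun g x hx => by rw [hTe _ (hXinv g x hx), hTe x hx, ← he g ⟨x, hx⟩]
  intro y hy
  refine Submodule.subset_span ⟨D, hDA, hDfix, e.symm ⟨y, hy⟩, (e.symm _).2, ?_⟩
  rw [hDT _ (e.symm _).2, hTe _ (e.symm _).2]
  simp

end Representation

theorem isotypic_component_eq_invariant_orbit_general
    {G L : Type*} [Group G] [AddCommGroup L] [Module ℂ L]
    (ρ : Representation ℂ G L)
    -- `L` has countable dimension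
    (hcount : ∃ s : Set L, s.Countable ∧ Submodule.span ℂ s = ⊤)
    -- the `G`-action on `L` is locally finite
    (hlocfin : ∀ v : L, ∃ Y : Submodule ℂ L,
      (∀ g : G, ∀ y ∈ Y, ρ g y ∈ Y) ∧ FiniteDimensional ℂ Y ∧ v ∈ Y)
    (A : Subalgebra ℂ (Module.End ℂ L))
    -- `A` acts irreducibly on `L`
    (hAirr : ∀ p : Submodule ℂ L, (∀ T ∈ A, ∀ x ∈ p, T x ∈ p) → p = ⊥ ∨ p = ⊤)
    -- `A` is invariant under the conjugation `G`-action
    (hAG : ∀ g : G, ∀ T ∈ A, conjEnd ρ g T ∈ A)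
    -- the `G`-action on `A` is completely reducible
    (hAcompred : ∀ p : Submodule ℂ (Module.End ℂ L),
      p ≤ Subalgebra.toSubmodule A → (∀ g : G, ∀ S ∈ p, conjEnd ρ g S ∈ p) →
      ∃ q : Submodule ℂ (Module.End ℂ L), q ≤ Subalgebra.toSubmodule A ∧
        (∀ g : G, ∀ S ∈ q, conjEnd ρ g S ∈ q) ∧
        p ⊓ q = ⊥ ∧ p ⊔ q = Subalgebra.toSubmodule A)
    -- `X` is a nonzero `G`-invariant subspace of `L`, irreducible as a `G`-module
    (X : Submodule ℂ L)
    (hXinv : ∀ g : G, ∀ x ∈ X, ρ g x ∈ X)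
    (hXirr : ∀ p : Submodule ℂ L, p ≤ X → (∀ g : G, ∀ x ∈ p, ρ g x ∈ p) →
      p = ⊥ ∨ p = X) :
    -- the isotypic component of the type of `X` equals `A^G·X`
    sSup {Y : Submodule ℂ L | (∀ g : G, ∀ y ∈ Y, ρ g y ∈ Y) ∧
        ∃ e : ↥X ≃ₗ[ℂ] ↥Y, ∀ (g : G) (x : ↥X),
          (↑(e ⟨ρ g ↑x, hXinv g ↑x x.2⟩) : L) = ρ g ↑(e x)} =
      Submodule.span ℂ
        {y : L | ∃ D ∈ A, (∀ g : G, conjEnd ρ g D = D) ∧ ∃ x ∈ X, D x = y} := by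
  rcases subsingleton_or_nontrivial L with _ | _
  · exact Subsingleton.elim _ _
  have := A.isSimpleModule_of_forall_invariant hAirr
  have := finiteDimensional_of_irreducible hlocfin hXinv hXirr
  obtain ⟨s, hs, hspan⟩ := hcount
  refine le_antisymm (sSup_le ?_) (Submodule.span_le.2 ?_)
  · rintro Y ⟨-, e, he⟩
    exact le_span_conjEnd_invariant_apply (Complex.lift_rank_lt_of_span_countable hs hspan)
      hAG hAcompred hXinv e he
  · rintro _ ⟨D, -, hD, x, hx, rfl⟩
    exact apply_mem_isotypicComponent hXinv hXirr hD hx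

/-- **Intermediate claim in the proof of Theorem 2.2, part 1.**
Let `X` be an irreducible `G`-invariant subspace of `L`.  The isotypic
component of `L` of the type of `X` — the supremum of all `G`-submodules of
`L` isomorphic to `X` as `G`-modules — equals the `A^G`-submodule generated
by `X`, namely the span of `{D x : D ∈ A^G, x ∈ X}`. -/
theorem isotypic_component_eq_invariant_orbit
    {G L : Type*} [Group G] [AddCommGroup L] [Module ℂ L]
    (ρ : Representation ℂ G L)
    -- `L` has countable dimension
    (hcount : ∃ s : Set L, s.Countable ∧ Submodule.span ℂ s = ⊤)
    -- the `G`-action on `L` is locally finite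
    (hlocfin : ∀ v : L, ∃ Y : Submodule ℂ L,
      (∀ g : G, ∀ y ∈ Y, ρ g y ∈ Y) ∧ FiniteDimensional ℂ Y ∧ v ∈ Y)
    -- the `G`-action on `L` is completely reducible
    (hcompred : ∀ p : Submodule ℂ L, (∀ g : G, ∀ y ∈ p, ρ g y ∈ p) →
      ∃ q : Submodule ℂ L, (∀ g : G, ∀ y ∈ q, ρ g y ∈ q) ∧ IsCompl p q)
    (A : Subalgebra ℂ (Module.End ℂ L))
    -- `A` acts irreducibly on `L`
    (hAirr : ∀ p : Submodule ℂ L, (∀ T ∈ A, ∀ x ∈ p, T x ∈ p) → p = ⊥ ∨ p = ⊤)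
    -- `A` is invariant under the conjugation `G`-action
    (hAG : ∀ g : G, ∀ T ∈ A, conjEnd ρ g T ∈ A)
    -- the `G`-action on `A` is locally finite
    (hAlocfin : ∀ T ∈ A, ∃ E : Submodule ℂ (Module.End ℂ L),
      E ≤ Subalgebra.toSubmodule A ∧ (∀ g : G, ∀ S ∈ E, conjEnd ρ g S ∈ E) ∧
      FiniteDimensional ℂ E ∧ T ∈ E)
    -- the `G`-action on `A` is completely reducible
    (hAcompred : ∀ p : Submodule ℂ (Module.End ℂ L),
      p ≤ Subalgebra.toSubmodule A → (∀ g : G, ∀ S ∈ p, conjEnd ρ g S ∈ p) →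
      ∃ q : Submodule ℂ (Module.End ℂ L), q ≤ Subalgebra.toSubmodule A ∧
        (∀ g : G, ∀ S ∈ q, conjEnd ρ g S ∈ q) ∧
        p ⊓ q = ⊥ ∧ p ⊔ q = Subalgebra.toSubmodule A)
    -- `X` is a nonzero `G`-invariant subspace of `L`, irreducible as a `G`-module
    (X : Submodule ℂ L) (hXne : X ≠ ⊥)
    (hXinv : ∀ g : G, ∀ x ∈ X, ρ g x ∈ X)
    (hXirr : ∀ p : Submodule ℂ L, p ≤ X → (∀ g : G, ∀ x ∈ p, ρ g x ∈ p) →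
      p = ⊥ ∨ p = X) :
    -- the isotypic component of the type of `X` equals `A^G·X`
    sSup {Y : Submodule ℂ L | (∀ g : G, ∀ y ∈ Y, ρ g y ∈ Y) ∧
        ∃ e : ↥X ≃ₗ[ℂ] ↥Y, ∀ (g : G) (x : ↥X),
          (↑(e ⟨ρ g ↑x, hXinv g ↑x x.2⟩) : L) = ρ g ↑(e x)} =
      Submodule.span ℂ
        {y : L | ∃ D ∈ A, (∀ g : G, conjEnd ρ g D = D) ∧ ∃ x ∈ X, D x = y} :=
  isotypic_component_eq_invariant_orbit_general ρ hcount hlocfin A hAirr hAG hAcompred X hXinv hXirr
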